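/- arXiv:2601.17896 — 2 statements merged into one kernel-verified Lean document; each statement's English description precedes it below -/
import Mathlib

section
/- For every p ∈ (1, ∞) there exists a constant C = C(p) > 0 such that for every real inner product space H and all a, b ∈ H, setting V(x) = ‖x‖^{(p−2)/2}·x (with V(0) = 0): (1) ‖V(a) − V(b)‖² ≤ C·⟨‖a‖^{p−2}a − ‖b‖^{p−2}b, a − b⟩; and (2) if (a, b) ≠ (0, 0), then C⁻¹·‖a − b‖²·(‖a‖ + ‖b‖)^{p−2} ≤ ‖V(a) − V(b)‖² ≤ C·‖a − b‖²·(‖a‖ + ‖b‖)^{p−2}. -/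
/-!
Write `α = ‖a‖` and `β = ‖b‖`. Every quantity in the theorem is an affine function of
`⟪a, b⟫ ∈ [-αβ, αβ]`, hence a nonnegative combination of its values at the two collinear
configurations `⟪a, b⟫ = ±αβ`. There the quantities become `(α^{p/2} ∓ β^{p/2})²`,
`(α^{p-1} ∓ β^{p-1})(α ∓ β)` and `(α ∓ β)²(α + β)^{p-2}`, so it suffices to show that these
scalar functions are comparable up to constants (`=Θ[𝓟 (Ici 0)]`) on the closed quadrant. By
symmetry one may take `β ≤ α`; then Bernoulli's inequality puts `α^r - β^r` between
`(α - β)α^{r-1}` and `r(α - β)α^{r-1}`, and `α ≤ α + β ≤ 2α`.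
-/

noncomputable section

namespace Paper

universe u

open Real Asymptotics Filter Set
open scoped InnerProductSpace

def sortedQuadrant : Set (ℝ × ℝ) := {x | 0 ≤ x.2 ∧ x.2 ≤ x.1}

section RpowInequalities

variable {r α β : ℝ}

lemma rpow_add_mul_rpow_sub_one_mul_sub_le_rpow (hr : 1 ≤ r) (hα : 0 < α) (hβ : 0 ≤ β) :
    α ^ r + r * α ^ (r - 1) * (β - α) ≤ β ^ r := by
  have h := one_add_mul_self_le_rpow_one_add (s := β / α - 1) (by linarith [div_nonneg hβ hα.le]) hr
  rw [add_sub_cancel, div_rpow hβ hα.le, le_div_iff₀ (rpow_pos_of_pos hα r)] at h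
  calc α ^ r + r * α ^ (r - 1) * (β - α) = (1 + r * (β / α - 1)) * α ^ r := by
        rw [rpow_sub_one hα.ne']; field_simp
    _ ≤ β ^ r := h

lemma rpow_le_rpow_add_mul_rpow_sub_one_mul_sub (hr₀ : 0 ≤ r) (hr₁ : r ≤ 1) (hα : 0 < α)
    (hβ : 0 ≤ β) : β ^ r ≤ α ^ r + r * α ^ (r - 1) * (β - α) := by
  have h := rpow_one_add_le_one_add_mul_self (s := β / α - 1)
    (by linarith [div_nonneg hβ hα.le]) hr₀ hr₁
  rw [add_sub_cancel, div_rpow hβ hα.le, div_le_iff₀ (rpow_pos_of_pos hα r)] at h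
  calc β ^ r ≤ (1 + r * (β / α - 1)) * α ^ r := h
    _ = α ^ r + r * α ^ (r - 1) * (β - α) := by rw [rpow_sub_one hα.ne']; field_simp

lemma rpow_le_rpow_sub_one_mul (hr : 1 ≤ r) (hβ : 0 ≤ β) (hβα : β ≤ α) :
    β ^ r ≤ α ^ (r - 1) * β :=
  calc β ^ r = β ^ (r - 1) * β := by rw [← rpow_add_one' hβ (by linarith), sub_add_cancel]
    _ ≤ α ^ (r - 1) * β := by gcongr

lemma rpow_sub_one_mul_le_rpow (hr : r ≤ 1) (hβ : 0 ≤ β) (hβα : β ≤ α) :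
    α ^ (r - 1) * β ≤ β ^ r := by
  rcases hβ.eq_or_lt with rfl | hβ
  · simp [rpow_nonneg]
  calc α ^ (r - 1) * β ≤ β ^ (r - 1) * β :=
        mul_le_mul_of_nonneg_right (rpow_le_rpow_of_nonpos hβ hβα (by linarith)) hβ.le
    _ = β ^ r := by rw [← rpow_add_one hβ.ne', sub_add_cancel]

lemma rpow_sub_rpow_mem_uIcc (hr : 0 < r) (hβ : 0 ≤ β) (hβα : β ≤ α) :
    α ^ r - β ^ r ∈ uIcc ((α - β) * α ^ (r - 1)) (r * ((α - β) * α ^ (r - 1))) := by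
  rcases (hβ.trans hβα).eq_or_lt with rfl | hα
  · obtain rfl : β = 0 := le_antisymm hβα hβ
    simp
  have hX : 0 ≤ (α - β) * α ^ (r - 1) := mul_nonneg (by linarith) (rpow_nonneg hα.le _)
  have hαr : α ^ r = α ^ (r - 1) * α := by rw [← rpow_add_one hα.ne', sub_add_cancel]
  rcases le_total 1 r with hr₁ | hr₁
  · rw [uIcc_of_le (le_mul_of_one_le_left hX hr₁)]
    constructor
    · linarith [rpow_le_rpow_sub_one_mul hr₁ hβ hβα]
    · linarith [rpow_add_mul_rpow_sub_one_mul_sub_le_rpow hr₁ hα hβ]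
  · rw [uIcc_of_ge (mul_le_of_le_one_left hX hr₁)]
    constructor
    · linarith [rpow_le_rpow_add_mul_rpow_sub_one_mul_sub hr.le hr₁ hα hβ]
    · linarith [rpow_sub_one_mul_le_rpow hr₁ hβ hβα]

lemma rpow_sub_rpow_mul_sub_nonneg (hr : 0 ≤ r) (hα : 0 ≤ α) (hβ : 0 ≤ β) :
    0 ≤ (α ^ r - β ^ r) * (α - β) := by
  rcases le_total β α with h | h
  · exact mul_nonneg (sub_nonneg.2 (rpow_le_rpow hβ h hr)) (sub_nonneg.2 h)
  · exact mul_nonneg_of_nonpos_of_nonpos (sub_nonpos.2 (rpow_le_rpow hα h hr)) (sub_nonpos.2 h)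

end RpowInequalities

section Comparability

variable {ι : Type*} {f g : ι → ℝ} {s : Set ι}

lemma isTheta_principal_of_mem_uIcc {k : ℝ} (hk : 0 < k) (hg : ∀ x ∈ s, 0 ≤ g x)
    (hfg : ∀ x ∈ s, f x ∈ uIcc (g x) (k * g x)) : f =Θ[𝓟 s] g := by
  have hbounds : ∀ x ∈ s, min 1 k * g x ≤ f x ∧ f x ≤ max 1 k * g x := fun x hx => by
    rw [min_mul_of_nonneg _ _ (hg x hx), max_mul_of_nonneg _ _ (hg x hx), one_mul]
    exact hfg x hx
  have hf : ∀ x ∈ s, 0 ≤ f x := fun x hx =>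
    (mul_nonneg (lt_min one_pos hk).le (hg x hx)).trans (hbounds x hx).1
  refine ⟨IsBigO.of_bound (max 1 k) (eventually_principal.2 fun x hx => ?_),
    IsBigO.of_bound (min 1 k)⁻¹ (eventually_principal.2 fun x hx => ?_)⟩
  · rw [norm_of_nonneg (hf x hx), norm_of_nonneg (hg x hx)]
    exact (hbounds x hx).2
  · rw [norm_of_nonneg (hf x hx), norm_of_nonneg (hg x hx), ← div_eq_inv_mul,
      le_div_iff₀ (lt_min one_pos hk), mul_comm]
    exact (hbounds x hx).1

lemma _root_.Asymptotics.IsBigO.eventually_le_mul (h : f =O[𝓟 s] g) (hg : ∀ x ∈ s, 0 ≤ g x) :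
    ∀ᶠ C in atTop, ∀ x ∈ s, f x ≤ C * g x :=
  (isBigO_iff_eventually_isBigOWith.1 h).mono fun _ hC x hx =>
    (le_norm_self _).trans ((isBigOWith_principal.1 hC x hx).trans_eq
      (by rw [norm_of_nonneg (hg x hx)]))

lemma _root_.Asymptotics.IsBigO.eventually_inv_mul_le (h : g =O[𝓟 s] f)
    (hf : ∀ x ∈ s, 0 ≤ f x) : ∀ᶠ C in atTop, ∀ x ∈ s, C⁻¹ * g x ≤ f x := by
  filter_upwards [h.eventually_le_mul hf, eventually_gt_atTop 0] with C hC hCpos x hx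
  rw [inv_mul_le_iff₀ hCpos]
  exact hC x hx

end Comparability

section PowerComparisons

lemma isTheta_Ici_of_sortedQuadrant {f g : ℝ × ℝ → ℝ} (hf : ∀ x, |f x.swap| = |f x|)
    (hg : ∀ x, |g x.swap| = |g x|) (h : f =Θ[𝓟 sortedQuadrant] g) : f =Θ[𝓟 (Ici 0)] g := by
  rw [← isTheta_norm_left, ← isTheta_norm_right] at h ⊢
  simp only [norm_eq_abs] at h ⊢
  have hk : Tendsto Prod.swap (𝓟 (Prod.swap ⁻¹' sortedQuadrant)) (𝓟 sortedQuadrant) :=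
    tendsto_principal_principal.2 fun _ hx => hx
  have hswap : ((fun x => |f x|) ∘ Prod.swap) =Θ[𝓟 (Prod.swap ⁻¹' sortedQuadrant)]
      ((fun x => |g x|) ∘ Prod.swap) := ⟨h.1.comp_tendsto hk, h.2.comp_tendsto hk⟩
  simp only [Function.comp_def, hf, hg] at hswap
  refine (h.sup hswap).mono ?_
  rw [sup_principal, principal_mono]
  rintro ⟨α, β⟩ ⟨hα, hβ⟩
  rcases le_total β α with hle | hle
  exacts [Or.inl ⟨hβ, hle⟩, Or.inr ⟨hα, hle⟩]

variable {r : ℝ}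

lemma isTheta_add_rpow_sortedQuadrant (q : ℝ) :
    (fun x : ℝ × ℝ => (x.1 + x.2) ^ q) =Θ[𝓟 sortedQuadrant] fun x => x.1 ^ q := by
  refine isTheta_principal_of_mem_uIcc (k := 2 ^ q) (by positivity)
    (fun x hx => rpow_nonneg (hx.1.trans hx.2) q) ?_
  rintro ⟨α, β⟩ ⟨hβ, hβα⟩
  dsimp only
  rcases (hβ.trans hβα).eq_or_lt with rfl | hα
  · obtain rfl : β = 0 := le_antisymm hβα hβ
    simp
  rw [← mul_rpow zero_le_two hα.le]
  rcases le_total 0 q with hq | hq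
  · rw [uIcc_of_le (by gcongr; linarith)]
    exact ⟨by gcongr; linarith, by gcongr; linarith⟩
  · rw [uIcc_of_ge (rpow_le_rpow_of_nonpos hα (by linarith) hq)]
    exact ⟨rpow_le_rpow_of_nonpos (by linarith) (by linarith) hq,
      rpow_le_rpow_of_nonpos hα (by linarith) hq⟩

lemma isTheta_rpow_sub_rpow_sortedQuadrant (hr : 0 < r) :
    (fun x : ℝ × ℝ => x.1 ^ r - x.2 ^ r) =Θ[𝓟 sortedQuadrant]
      fun x => (x.1 - x.2) * x.1 ^ (r - 1) :=
  isTheta_principal_of_mem_uIcc hr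
    (fun _ hx => mul_nonneg (sub_nonneg.2 hx.2) (rpow_nonneg (hx.1.trans hx.2) _))
    fun _ hx => rpow_sub_rpow_mem_uIcc hr hx.1 hx.2

lemma isTheta_rpow_add_rpow_sortedQuadrant (hr : 0 ≤ r) :
    (fun x : ℝ × ℝ => x.1 ^ r + x.2 ^ r) =Θ[𝓟 sortedQuadrant] fun x => x.1 ^ r := by
  refine isTheta_principal_of_mem_uIcc two_pos
    (fun x hx => rpow_nonneg (hx.1.trans hx.2) r) fun x hx => ?_
  have hle : x.2 ^ r ≤ x.1 ^ r := rpow_le_rpow hx.1 hx.2 hr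
  rw [uIcc_of_le (by linarith [rpow_nonneg (hx.1.trans hx.2) r])]
  exact ⟨by linarith [rpow_nonneg hx.1 r], by linarith⟩

lemma isTheta_rpow_sub_rpow (hr : 0 < r) :
    (fun x : ℝ × ℝ => x.1 ^ r - x.2 ^ r) =Θ[𝓟 (Ici 0)]
      fun x => (x.1 - x.2) * (x.1 + x.2) ^ (r - 1) :=
  isTheta_Ici_of_sortedQuadrant (fun _ => abs_sub_comm _ _)
    (fun _ => by simp only [Prod.fst_swap, Prod.snd_swap, abs_mul, abs_sub_comm, add_comm])
    ((isTheta_rpow_sub_rpow_sortedQuadrant hr).trans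
      (isTheta_rfl.mul (isTheta_add_rpow_sortedQuadrant _)).symm)

lemma isTheta_rpow_add_rpow (hr : 0 ≤ r) :
    (fun x : ℝ × ℝ => x.1 ^ r + x.2 ^ r) =Θ[𝓟 (Ici 0)] fun x => (x.1 + x.2) ^ r :=
  isTheta_Ici_of_sortedQuadrant (fun _ => by simp only [Prod.fst_swap, Prod.snd_swap, add_comm])
    (fun _ => by simp only [Prod.fst_swap, Prod.snd_swap, add_comm])
    ((isTheta_rpow_add_rpow_sortedQuadrant hr).trans (isTheta_add_rpow_sortedQuadrant r).symm)

end PowerComparisons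

section PLaplaceComparisons

variable {p : ℝ}

lemma sq_mul_rpow_sub_two {y : ℝ} (hy : 0 ≤ y) (hp : p ≠ 0) : y ^ 2 * y ^ (p - 2) = y ^ p := by
  rw [← rpow_two, ← rpow_add' hy (by simpa using hp), add_sub_cancel]

lemma isTheta_sq_rpow_half_sub (hp : 0 < p) :
    (fun x : ℝ × ℝ => (x.1 ^ (p / 2) - x.2 ^ (p / 2)) ^ 2) =Θ[𝓟 (Ici 0)]
      fun x => (x.1 - x.2) ^ 2 * (x.1 + x.2) ^ (p - 2) := by
  refine ((isTheta_rpow_sub_rpow (half_pos hp)).pow 2).trans_eventuallyEq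
    (eventually_principal.2 fun x hx => ?_)
  dsimp only
  rw [mul_pow, ← rpow_mul_natCast (add_nonneg hx.1 hx.2)]
  ring_nf

lemma isTheta_rpow_sub_one_sub_mul_sub (hp : 1 < p) :
    (fun x : ℝ × ℝ => (x.1 ^ (p - 1) - x.2 ^ (p - 1)) * (x.1 - x.2)) =Θ[𝓟 (Ici 0)]
      fun x => (x.1 - x.2) ^ 2 * (x.1 + x.2) ^ (p - 2) := by
  refine ((isTheta_rpow_sub_rpow (sub_pos.2 hp)).mul isTheta_rfl).trans_eventuallyEq
    (Eventually.of_forall fun x => ?_)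
  rw [sub_sub, one_add_one_eq_two]
  ring

lemma isTheta_sq_rpow_half_add (hp : 0 < p) :
    (fun x : ℝ × ℝ => (x.1 ^ (p / 2) + x.2 ^ (p / 2)) ^ 2) =Θ[𝓟 (Ici 0)]
      fun x => (x.1 + x.2) ^ 2 * (x.1 + x.2) ^ (p - 2) := by
  refine ((isTheta_rpow_add_rpow (half_pos hp).le).pow 2).trans_eventuallyEq
    (eventually_principal.2 fun x hx => ?_)
  dsimp only
  rw [← rpow_mul_natCast (add_nonneg hx.1 hx.2), sq_mul_rpow_sub_two (add_nonneg hx.1 hx.2) hp.ne']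
  ring_nf

lemma isTheta_rpow_sub_one_add_mul_add (hp : 1 < p) :
    (fun x : ℝ × ℝ => (x.1 ^ (p - 1) + x.2 ^ (p - 1)) * (x.1 + x.2)) =Θ[𝓟 (Ici 0)]
      fun x => (x.1 + x.2) ^ 2 * (x.1 + x.2) ^ (p - 2) := by
  refine ((isTheta_rpow_add_rpow (sub_pos.2 hp).le).mul isTheta_rfl).trans_eventuallyEq
    (eventually_principal.2 fun x hx => ?_)
  dsimp only
  rw [← rpow_add_one' (add_nonneg hx.1 hx.2) (by linarith), sub_add_cancel,
    sq_mul_rpow_sub_two (add_nonneg hx.1 hx.2) (by linarith)]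

lemma eventually_sub_rpow_bounds (hp : 1 < p) :
    ∀ᶠ C in atTop, ∀ α β : ℝ, 0 ≤ α → 0 ≤ β →
      (α ^ (p / 2) - β ^ (p / 2)) ^ 2 ≤ C * ((α ^ (p - 1) - β ^ (p - 1)) * (α - β)) ∧
      C⁻¹ * ((α - β) ^ 2 * (α + β) ^ (p - 2)) ≤ (α ^ (p / 2) - β ^ (p / 2)) ^ 2 ∧
      (α ^ (p / 2) - β ^ (p / 2)) ^ 2 ≤ C * ((α - β) ^ 2 * (α + β) ^ (p - 2)) := by
  have hV := isTheta_sq_rpow_half_sub (by linarith : 0 < p)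
  filter_upwards [(hV.trans (isTheta_rpow_sub_one_sub_mul_sub hp).symm).isBigO.eventually_le_mul
      fun x hx => rpow_sub_rpow_mul_sub_nonneg (by linarith) hx.1 hx.2,
    hV.symm.isBigO.eventually_inv_mul_le fun _ _ => sq_nonneg _,
    hV.isBigO.eventually_le_mul fun x hx =>
      mul_nonneg (sq_nonneg _) (rpow_nonneg (add_nonneg hx.1 hx.2) _)] with C h₁ h₂ h₃
  exact fun α β hα hβ => ⟨h₁ (α, β) ⟨hα, hβ⟩, h₂ (α, β) ⟨hα, hβ⟩, h₃ (α, β) ⟨hα, hβ⟩⟩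

lemma eventually_add_rpow_bounds (hp : 1 < p) :
    ∀ᶠ C in atTop, ∀ α β : ℝ, 0 ≤ α → 0 ≤ β →
      (α ^ (p / 2) + β ^ (p / 2)) ^ 2 ≤ C * ((α ^ (p - 1) + β ^ (p - 1)) * (α + β)) ∧
      C⁻¹ * ((α + β) ^ 2 * (α + β) ^ (p - 2)) ≤ (α ^ (p / 2) + β ^ (p / 2)) ^ 2 ∧
      (α ^ (p / 2) + β ^ (p / 2)) ^ 2 ≤ C * ((α + β) ^ 2 * (α + β) ^ (p - 2)) := by
  have hV := isTheta_sq_rpow_half_add (by linarith : 0 < p)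
  filter_upwards [(hV.trans (isTheta_rpow_sub_one_add_mul_add hp).symm).isBigO.eventually_le_mul
      fun x hx => mul_nonneg (add_nonneg (rpow_nonneg hx.1 _) (rpow_nonneg hx.2 _))
        (add_nonneg hx.1 hx.2),
    hV.symm.isBigO.eventually_inv_mul_le fun _ _ => sq_nonneg _,
    hV.isBigO.eventually_le_mul fun x hx =>
      mul_nonneg (sq_nonneg _) (rpow_nonneg (add_nonneg hx.1 hx.2) _)] with C h₁ h₂ h₃
  exact fun α β hα hβ => ⟨h₁ (α, β) ⟨hα, hβ⟩, h₂ (α, β) ⟨hα, hβ⟩, h₃ (α, β) ⟨hα, hβ⟩⟩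

end PLaplaceComparisons

lemma exists_inner_smul_sub_smul_eq {H : Type*} [NormedAddCommGroup H] [InnerProductSpace ℝ H]
    (a b : H) : ∃ μ ν : ℝ, 0 ≤ μ ∧ 0 ≤ ν ∧ ∀ u v u' v' : ℝ,
      ⟪u • a - v • b, u' • a - v' • b⟫_ℝ =
        μ * ((u * ‖a‖ - v * ‖b‖) * (u' * ‖a‖ - v' * ‖b‖)) +
          ν * ((u * ‖a‖ + v * ‖b‖) * (u' * ‖a‖ + v' * ‖b‖)) := by
  obtain ⟨ν, μ, hν, hμ, hsum, hinner⟩ :=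
    (Convex.mem_Icc (neg_le_self (by positivity : 0 ≤ ‖a‖ * ‖b‖))).1
      (abs_le.1 (abs_real_inner_le_norm a b))
  refine ⟨μ, ν, hμ, hν, fun u v u' v' => ?_⟩
  simp only [inner_sub_left, inner_sub_right, real_inner_smul_left, real_inner_smul_right,
    real_inner_self_eq_norm_sq, real_inner_comm a b]
  linear_combination (u * v' + v * u') * hinner - (u * u' * ‖a‖ ^ 2 + v * v' * ‖b‖ ^ 2) * hsum

/-- **Statement 15.** For every `p ∈ (1, ∞)` there is a constant `C = C(p) > 0` such that for
every real inner product space `H` and all `a, b ∈ H`, with `V(x) = ‖x‖^{(p−2)/2} • x`: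
(1) `‖V(a) − V(b)‖² ≤ C·⟨‖a‖^{p−2} a − ‖b‖^{p−2} b, a − b⟩`; and
(2) if `(a, b) ≠ (0, 0)`, then
`C⁻¹·‖a − b‖²·(‖a‖+‖b‖)^{p−2} ≤ ‖V(a) − V(b)‖² ≤ C·‖a − b‖²·(‖a‖+‖b‖)^{p−2}`. -/
theorem p_laplace_vector_inequalities (p : ℝ) (hp : 1 < p) :
    ∃ C : ℝ, 0 < C ∧
      ∀ (H : Type u) [NormedAddCommGroup H] [InnerProductSpace ℝ H] (a b : H),
        (‖(‖a‖ ^ ((p - 2) / 2)) • a - (‖b‖ ^ ((p - 2) / 2)) • b‖ ^ 2 ≤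
          C * (inner ℝ ((‖a‖ ^ (p - 2)) • a - (‖b‖ ^ (p - 2)) • b) (a - b) : ℝ)) ∧
        ((a, b) ≠ (0, 0) →
          C⁻¹ * (‖a - b‖ ^ 2 * (‖a‖ + ‖b‖) ^ (p - 2)) ≤
              ‖(‖a‖ ^ ((p - 2) / 2)) • a - (‖b‖ ^ ((p - 2) / 2)) • b‖ ^ 2 ∧
            ‖(‖a‖ ^ ((p - 2) / 2)) • a - (‖b‖ ^ ((p - 2) / 2)) • b‖ ^ 2 ≤
              C * (‖a - b‖ ^ 2 * (‖a‖ + ‖b‖) ^ (p - 2))) := by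
  obtain ⟨C, hsub, hadd, hC⟩ := ((eventually_sub_rpow_bounds hp).and
    ((eventually_add_rpow_bounds hp).and (eventually_gt_atTop 0))).exists
  refine ⟨C, hC, fun H _ _ a b => ?_⟩
  have hpow : ∀ x : H, ‖x‖ ^ ((p - 2) / 2) * ‖x‖ = ‖x‖ ^ (p / 2) ∧
      ‖x‖ ^ (p - 2) * ‖x‖ = ‖x‖ ^ (p - 1) := fun x => by
    constructor <;> rw [← rpow_add_one' (norm_nonneg x) (by linarith)] <;> ring_nf
  obtain ⟨μ, ν, hμ, hν, hgram⟩ := exists_inner_smul_sub_smul_eq a b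
  have hV := hgram (‖a‖ ^ ((p - 2) / 2)) (‖b‖ ^ ((p - 2) / 2)) (‖a‖ ^ ((p - 2) / 2))
    (‖b‖ ^ ((p - 2) / 2))
  have hI := hgram (‖a‖ ^ (p - 2)) (‖b‖ ^ (p - 2)) 1 1
  have hD := hgram 1 1 1 1
  simp only [one_smul, one_mul, (hpow a).1, (hpow b).1, (hpow a).2, (hpow b).2,
    real_inner_self_eq_norm_sq] at hV hI hD
  obtain ⟨s₁, s₂, s₃⟩ := hsub ‖a‖ ‖b‖ (norm_nonneg a) (norm_nonneg b)
  obtain ⟨a₁, a₂, a₃⟩ := hadd ‖a‖ ‖b‖ (norm_nonneg a) (norm_nonneg b)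
  refine ⟨?_, fun _ => ⟨?_, ?_⟩⟩
  · rw [hV, hI]
    linarith [mul_le_mul_of_nonneg_left s₁ hμ, mul_le_mul_of_nonneg_left a₁ hν]
  · rw [hV, hD]
    linarith [mul_le_mul_of_nonneg_left s₂ hμ, mul_le_mul_of_nonneg_left a₂ hν]
  · rw [hV, hD]
    linarith [mul_le_mul_of_nonneg_left s₃ hμ, mul_le_mul_of_nonneg_left a₃ hν]

end Paper
end
end

section
/- For every p ∈ [2, ∞) there exists a constant C = C(p) > 0 such that for every real inner product space H and all a, b ∈ H: ‖a − b‖^p ≤ C·⟨‖a‖^{p−2}a − ‖b‖^{p−2}b, a − b⟩. -/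
/-!
With `d = p - 2`, `α = ‖a‖^d` and `β = ‖b‖^d`, the identity
`2⟪α a - β b, a - b⟫ = (α + β)‖a - b‖² + (α - β)(‖a‖² - ‖b‖²)` shows
`(α + β)‖a - b‖² ≤ 2⟪α a - β b, a - b⟫`, since `t ↦ t^d` and `t ↦ t²` are both monotone.
It remains to bound `‖a - b‖^d ≤ (2 max(‖a‖, ‖b‖))^d ≤ 2^d (α + β)`, which gives `C = 2^(p-1)`.
-/

namespace Paper

universe u

theorem two_mul_inner_smul_sub_smul_sub {H : Type*} [NormedAddCommGroup H]
    [InnerProductSpace ℝ H] (α β : ℝ) (a b : H) :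
    2 * inner ℝ (α • a - β • b) (a - b) =
      (α + β) * ‖a - b‖ ^ 2 + (α - β) * (‖a‖ ^ 2 - ‖b‖ ^ 2) := by
  rw [norm_sub_sq_real]
  simp only [inner_sub_left, inner_sub_right, real_inner_smul_left,
    real_inner_self_eq_norm_sq, real_inner_comm b a]
  ring

theorem rpow_sub_rpow_mul_sq_sub_sq_nonneg {x y d : ℝ} (hx : 0 ≤ x) (hy : 0 ≤ y) (hd : 0 ≤ d) :
    0 ≤ (x ^ d - y ^ d) * (x ^ 2 - y ^ 2) := by
  rcases le_total x y with hxy | hxy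
  · exact mul_nonneg_of_nonpos_of_nonpos
      (sub_nonpos.2 (Real.rpow_le_rpow hx hxy hd)) (sub_nonpos.2 (by gcongr))
  · exact mul_nonneg
      (sub_nonneg.2 (Real.rpow_le_rpow hy hxy hd)) (sub_nonneg.2 (by gcongr))

theorem add_rpow_le_two_rpow_mul_add_rpow {x y d : ℝ} (hx : 0 ≤ x) (hy : 0 ≤ y) (hd : 0 ≤ d) :
    (x + y) ^ d ≤ 2 ^ d * (x ^ d + y ^ d) :=
  calc (x + y) ^ d ≤ (2 * max x y) ^ d := by
        gcongr
        linarith [le_max_left x y, le_max_right x y]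
    _ = 2 ^ d * max (x ^ d) (y ^ d) := by
        rw [Real.mul_rpow zero_le_two (le_max_of_le_left hx), Real.rpow_max hx hy hd]
    _ ≤ 2 ^ d * (x ^ d + y ^ d) := by
        gcongr
        exact max_le_add_of_nonneg (by positivity) (by positivity)

theorem norm_sub_rpow_le_two_rpow_mul {E : Type*} [SeminormedAddCommGroup E] {d : ℝ}
    (hd : 0 ≤ d) (a b : E) :
    ‖a - b‖ ^ d ≤ 2 ^ d * (‖a‖ ^ d + ‖b‖ ^ d) :=
  calc ‖a - b‖ ^ d ≤ (‖a‖ + ‖b‖) ^ d := by gcongr; exact norm_sub_le a b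
    _ ≤ 2 ^ d * (‖a‖ ^ d + ‖b‖ ^ d) :=
      add_rpow_le_two_rpow_mul_add_rpow (norm_nonneg a) (norm_nonneg b) hd

section InnerProductSpace

variable {H : Type*} [NormedAddCommGroup H] [InnerProductSpace ℝ H]

theorem add_rpow_mul_norm_sub_sq_le_two_mul_inner {d : ℝ} (hd : 0 ≤ d) (a b : H) :
    (‖a‖ ^ d + ‖b‖ ^ d) * ‖a - b‖ ^ 2 ≤
      2 * inner ℝ (‖a‖ ^ d • a - ‖b‖ ^ d • b) (a - b) := by
  rw [two_mul_inner_smul_sub_smul_sub]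
  linarith [rpow_sub_rpow_mul_sq_sub_sq_nonneg (norm_nonneg a) (norm_nonneg b) hd]

theorem norm_sub_rpow_add_two_le_inner {d : ℝ} (hd : 0 ≤ d) (a b : H) :
    ‖a - b‖ ^ (d + 2) ≤ 2 ^ (d + 1) * inner ℝ (‖a‖ ^ d • a - ‖b‖ ^ d • b) (a - b) := by
  have h2 : d + ((2 : ℕ) : ℝ) ≠ 0 := by positivity
  calc ‖a - b‖ ^ (d + 2) = ‖a - b‖ ^ d * ‖a - b‖ ^ 2 := by
        exact_mod_cast Real.rpow_add_natCast' (norm_nonneg _) h2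
    _ ≤ 2 ^ d * ((‖a‖ ^ d + ‖b‖ ^ d) * ‖a - b‖ ^ 2) := by
        rw [← mul_assoc]
        gcongr
        exact norm_sub_rpow_le_two_rpow_mul hd a b
    _ ≤ 2 ^ d * (2 * inner ℝ (‖a‖ ^ d • a - ‖b‖ ^ d • b) (a - b)) := by
        gcongr ?_ * ?_
        exact add_rpow_mul_norm_sub_sq_le_two_mul_inner hd a b
    _ = 2 ^ (d + 1) * inner ℝ (‖a‖ ^ d • a - ‖b‖ ^ d • b) (a - b) := by
        rw [Real.rpow_add_one two_ne_zero, mul_assoc]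

end InnerProductSpace

/-- **Statement 16.** For every `p ∈ [2, ∞)` there is a constant `C = C(p) > 0` such that for
every real inner product space `H` and all `a, b ∈ H`:
`‖a − b‖^p ≤ C·⟨‖a‖^{p−2} a − ‖b‖^{p−2} b, a − b⟩`. -/
theorem p_laplace_monotonicity (p : ℝ) (hp : 2 ≤ p) :
    ∃ C : ℝ, 0 < C ∧
      ∀ (H : Type u) [NormedAddCommGroup H] [InnerProductSpace ℝ H] (a b : H),
        ‖a - b‖ ^ p ≤
          C * (inner ℝ ((‖a‖ ^ (p - 2)) • a - (‖b‖ ^ (p - 2)) • b) (a - b) : ℝ) := by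
  refine ⟨2 ^ (p - 1), by positivity, fun H _ _ a b => ?_⟩
  have key := norm_sub_rpow_add_two_le_inner (sub_nonneg.2 hp) a b
  rwa [sub_add_cancel, show p - 2 + 1 = p - 1 by ring] at key

end Paper
end
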